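/- arXiv:0710.3773 — 3 statements merged into one kernel-verified Lean document; each statement's English description precedes it below -/
import Mathlib

section
/- Let f : ℕ → {0,1} satisfy f(0) = f(1) = 0 and f(s) = 1 for every even s ≥ 2. Then for every admissible path (m_n, m_{n+1}, m_{n+2}) of the chain (i.e. each consecutive pair is one of the transitions 0→1, 1→2, s→0 or s→s+1 for s ≥ 2), one has ( f(m_n) = 0 and f(m_{n+1}) = 0 and f(m_{n+2}) = 1 ) if and only if m_n = 0 (in which case necessarily m_{n+1} = 1 and m_{n+2} = 2). Consequently, for the Markov chain {M_i} with these transitions, almost surely the coded process X_i = f(M_i) shows the pattern (0,0,1) at positions (n, n+1, n+2) exactly when M_n = 0. -/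
open MeasureTheory

noncomputable section

/-- One-sided trajectories of the chain on `ℕ`. -/
abbrev NPath := ℕ → ℕ

/-- The allowed transitions of the chain: `0 → 1`, `1 → 2`, and `s → 0` or `s → s + 1`
for `s ≥ 2`. -/
def Step (s t : ℕ) : Prop :=
  (s = 0 ∧ t = 1) ∨ (s = 1 ∧ t = 2) ∨ (2 ≤ s ∧ (t = 0 ∨ t = s + 1))

theorem step_zero_left_iff {t : ℕ} : Step 0 t ↔ t = 1 := by
  simp [Step]

theorem step_one_left_iff {t : ℕ} : Step 1 t ↔ t = 2 := by
  simp [Step]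

theorem eq_one_and_eq_two_of_step_zero {t u : ℕ} (hst : Step 0 t) (htu : Step t u) :
    t = 1 ∧ u = 2 := by
  obtain rfl := step_zero_left_iff.mp hst
  exact ⟨rfl, step_one_left_iff.mp htu⟩

section Coding

variable {f : ℕ → Bool} (heven : ∀ s, 2 ≤ s → Even s → f s = true)
include heven

/-- Two consecutive `0`s of the code can only be read on the transitions `0 → 1` and
`s → 0`: the moves `1 → 2` and `s → s + 1` with `s` odd land on an even state `≥ 2`. -/
theorem eq_zero_or_eq_zero_of_step_of_code_eq_false {s t : ℕ} (hst : Step s t)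
    (hs : f s = false) (ht : f t = false) : s = 0 ∨ t = 0 := by
  have hodd : 2 ≤ s → Odd s := fun h2 =>
    Nat.not_even_iff_odd.mp fun he => by simp [heven s h2 he] at hs
  rcases hst with ⟨rfl, -⟩ | ⟨rfl, rfl⟩ | ⟨h2, rfl | rfl⟩
  · exact Or.inl rfl
  · simp [heven 2 le_rfl even_two] at ht
  · exact Or.inr rfl
  · simp [heven (s + 1) (by omega) (hodd h2).add_one] at ht

theorem code_pattern_iff_eq_zero (h0 : f 0 = false) (h1 : f 1 = false) {m0 m1 m2 : ℕ}
    (h01 : Step m0 m1) (h12 : Step m1 m2) :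
    (f m0 = false ∧ f m1 = false ∧ f m2 = true) ↔ m0 = 0 := by
  constructor
  · rintro ⟨hf0, hf1, hf2⟩
    refine (eq_zero_or_eq_zero_of_step_of_code_eq_false heven h01 hf0 hf1).resolve_right ?_
    rintro rfl
    simp [step_zero_left_iff.mp h12, h1] at hf2
  · rintro rfl
    obtain ⟨rfl, rfl⟩ := eq_one_and_eq_two_of_step_zero h01 h12
    exact ⟨h0, h1, heven 2 le_rfl even_two⟩

end Coding

/-- For a coding `f` with `f(0) = f(1) = 0` and `f(s) = 1` for even `s ≥ 2`, along any
admissible path the coded pattern `(0,0,1)` at three consecutive positions occurs exactly when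
the chain is in state `0` at the first of these positions (in which case the next two states
are necessarily `1` and `2`).  Consequently, for any process whose trajectories are almost
surely admissible, the coded process `X_i = f(M_i)` almost surely shows the pattern `(0,0,1)`
at `(n, n+1, n+2)` exactly when `M_n = 0`. -/
theorem pattern_001_iff_state_zero (f : ℕ → Bool)
    (h0 : f 0 = false) (h1 : f 1 = false)
    (heven : ∀ s, 2 ≤ s → Even s → f s = true) :
    (∀ m0 m1 m2 : ℕ, Step m0 m1 → Step m1 m2 →
      ((f m0 = false ∧ f m1 = false ∧ f m2 = true) ↔ m0 = 0) ∧
      (m0 = 0 → m1 = 1 ∧ m2 = 2)) ∧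
    (∀ μ : Measure NPath, (∀ᵐ ω ∂μ, ∀ i : ℕ, Step (ω i) (ω (i + 1))) →
      ∀ᵐ ω ∂μ, ∀ n : ℕ,
        ((f (ω n) = false ∧ f (ω (n + 1)) = false ∧ f (ω (n + 2)) = true) ↔ ω n = 0)) := by
  refine ⟨fun m0 m1 m2 h01 h12 => ⟨code_pattern_iff_eq_zero heven h0 h1 h01 h12, ?_⟩, ?_⟩
  · rintro rfl
    exact eq_one_and_eq_two_of_step_zero h01 h12
  · intro μ hμ
    filter_upwards [hμ] with ω hω n
    exact code_pattern_iff_eq_zero heven h0 h1 (hω n) (hω (n + 1))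
end
end

section
/- Let k ≥ 1 and let f : {0,1,…,2k} → {0,1} satisfy f(0) = f(1) = 0 and f(s) = 1 for every even s with 2 ≤ s ≤ 2k. Then the map (m_0,…,m_t) ↦ (f(m_0),…,f(m_t)) is injective on the set of admissible paths (m_0,…,m_t) of the chain with m_0 = 0, m_t = 2k, and m_i ≠ 2k for all i < t. Consequently, on the event {M_0 = 0}, the random vector (M_0,…,M_{ψ_k}) is almost surely a measurable function of (f(M_0),…,f(M_{ψ_k})). -/
/-! Two admissible paths from `0` with the same code can only separate at a
common state `s ≥ 2` where one resets to `0` and the other climbs to `s + 1`. Equal codes force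
`f (s + 1) = f 0 = 0`, so `s + 1` is odd and lies strictly below `2k`. The resetting path is then
forced along `0, 1, 2`, with code `0, 0, 1`; the climbing path cannot imitate it, because its only
moves from the odd state `s + 1` are to `0` and to the even state `s + 2`, whose code is `1`, and
after `0` it is forced to `1`, whose code is `0`. -/

open MeasureTheory

noncomputable section

theorem step_iff {s t : ℕ} : Step s t ↔ t = s + 1 ∨ (t = 0 ∧ 2 ≤ s) := by
  unfold Step; omega

theorem Step.eq_one_of_zero {x : ℕ} (h : Step 0 x) : x = 1 := by
  have := step_iff.mp h; omega

theorem Step.eq_two_of_one {x : ℕ} (h : Step 1 x) : x = 2 := by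
  have := step_iff.mp h; omega

structure IsStoppedPath (k t : ℕ) (m : ℕ → ℕ) : Prop where
  start : m 0 = 0
  step : ∀ i < t, Step (m i) (m (i + 1))
  finish : m t = 2 * k
  avoid : ∀ i < t, m i ≠ 2 * k

structure IsParityCoding (k : ℕ) (f : ℕ → Bool) : Prop where
  zero : f 0 = false
  one : f 1 = false
  even : ∀ s, 2 ≤ s → s ≤ 2 * k → Even s → f s = true

variable {k t : ℕ} {m m' : ℕ → ℕ} {f : ℕ → Bool}

namespace IsStoppedPath

theorem lt_of_ne (hm : IsStoppedPath k t m) {i : ℕ} (hi : i ≤ t) (h : m i ≠ 2 * k) : i < t :=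
  lt_of_le_of_ne hi fun hit => h (hit ▸ hm.finish)

theorem le (hm : IsStoppedPath k t m) {i : ℕ} (hi : i ≤ t) : m i ≤ 2 * k := by
  induction i with
  | zero => simp [hm.start]
  | succ i ih =>
    have := step_iff.mp (hm.step i (by omega))
    have := hm.avoid i (by omega)
    have := ih (by omega)
    omega

end IsStoppedPath

namespace IsParityCoding

theorem odd_of_eq_false (hf : IsParityCoding k f) {s : ℕ} (h2 : 2 ≤ s) (hs : s ≤ 2 * k)
    (h : f s = false) : Odd s := by
  by_contra hodd
  simp [hf.even s h2 hs (Nat.not_odd_iff_even.mp hodd)] at h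

theorem eq_zero_of_step_of_odd (hf : IsParityCoding k f) {s x : ℕ} (hstep : Step s x)
    (hs : Odd s) (hx : x ≤ 2 * k) (hfx : f x = false) : x = 0 := by
  rcases step_iff.mp hstep with rfl | ⟨rfl, -⟩
  · have hx2 : 2 ≤ s + 1 := by obtain ⟨c, rfl⟩ := hs; omega
    simp [hf.even (s + 1) hx2 hx hs.add_one] at hfx
  · rfl

theorem not_reset_and_climb (hf : IsParityCoding k f) (hm : IsStoppedPath k t m)
    (hm' : IsStoppedPath k t m') (hcode : ∀ i ≤ t, f (m i) = f (m' i)) {i : ℕ} (hi : i < t)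
    (heq : m i = m' i) (hreset : m (i + 1) = 0) (hclimb : m' (i + 1) = m' i + 1) : False := by
  have h2 : 2 ≤ m' (i + 1) := by have := step_iff.mp (hm.step i hi); omega
  have hodd : Odd (m' (i + 1)) :=
    hf.odd_of_eq_false h2 (hm'.le hi) (by rw [← hcode _ hi, hreset, hf.zero])
  have hi1 : i + 1 < t := hm'.lt_of_ne hi fun h => Nat.not_odd_iff_even.mpr ⟨k, by omega⟩ hodd
  have hm2 : m (i + 2) = 1 := (hreset ▸ hm.step _ hi1).eq_one_of_zero
  have hm'2 : m' (i + 2) = 0 := hf.eq_zero_of_step_of_odd (hm'.step _ hi1) hodd (hm'.le hi1)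
    (by rw [← hcode _ hi1, hm2, hf.one])
  have hi2 : i + 2 < t := hm.lt_of_ne hi1 (by omega)
  have hm3 : m (i + 3) = 2 := (hm2 ▸ hm.step _ hi2).eq_two_of_one
  have hm'3 : m' (i + 3) = 1 := (hm'2 ▸ hm'.step _ hi2).eq_one_of_zero
  have h2k : m (i + 3) ≤ 2 * k := hm.le hi2
  have := hcode (i + 3) hi2
  rw [hm3, hm'3, hf.one, hf.even 2 le_rfl (by omega) even_two] at this
  exact Bool.noConfusion this

theorem eq_of_code_eq (hf : IsParityCoding k f) (hm : IsStoppedPath k t m)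
    (hm' : IsStoppedPath k t m') (hcode : ∀ i ≤ t, f (m i) = f (m' i)) :
    ∀ i ≤ t, m i = m' i := by
  intro i hi
  induction i with
  | zero => rw [hm.start, hm'.start]
  | succ i ih =>
    have heq := ih (by omega)
    rcases step_iff.mp (hm.step i hi) with h | ⟨h, -⟩ <;>
      rcases step_iff.mp (hm'.step i hi) with h' | ⟨h', -⟩
    · rw [h, h', heq]
    · exact (hf.not_reset_and_climb hm' hm (fun j hj => (hcode j hj).symm) hi heq.symm h' h).elim
    · exact (hf.not_reset_and_climb hm hm' hcode hi heq h h').elim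
    · rw [h, h']

theorem eq_of_ofFn_eq (hf : IsParityCoding k f) {t' : ℕ} (hm : IsStoppedPath k t m)
    (hm' : IsStoppedPath k t' m')
    (hcode : List.ofFn (fun i : Fin (t + 1) => f (m i)) =
      List.ofFn (fun i : Fin (t' + 1) => f (m' i))) :
    t = t' ∧ ∀ i ≤ t, m i = m' i := by
  obtain rfl : t = t' := by simpa using congrArg List.length hcode
  exact ⟨rfl, hf.eq_of_code_eq hm hm' fun i hi => congrFun (List.ofFn_inj.mp hcode) ⟨i, by omega⟩⟩

end IsParityCoding

def stoppedPaths (k : ℕ) : Set (List ℕ) :=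
  {l | ∃ t m, IsStoppedPath k t m ∧ List.ofFn (fun i : Fin (t + 1) => m i) = l}

theorem IsParityCoding.injOn_map (hf : IsParityCoding k f) :
    Set.InjOn (List.map f) (stoppedPaths k) := by
  rintro _ ⟨t, m, hm, rfl⟩ _ ⟨t', m', hm', rfl⟩ hcode
  simp only [List.map_ofFn] at hcode
  obtain ⟨rfl, heq⟩ := hf.eq_of_ofFn_eq hm hm' hcode
  exact congrArg List.ofFn (funext fun i => heq i (by omega))

theorem coded_path_injective_general (k : ℕ) (f : ℕ → Bool)
    (h0 : f 0 = false) (h1 : f 1 = false)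
    (heven : ∀ s, 2 ≤ s → s ≤ 2 * k → Even s → f s = true) :
    (∀ (t t' : ℕ) (m m' : ℕ → ℕ),
      m 0 = 0 → (∀ i < t, Step (m i) (m (i + 1))) →
      m t = 2 * k → (∀ i < t, m i ≠ 2 * k) →
      m' 0 = 0 → (∀ i < t', Step (m' i) (m' (i + 1))) →
      m' t' = 2 * k → (∀ i < t', m' i ≠ 2 * k) →
      List.ofFn (fun i : Fin (t + 1) => f (m i)) =
        List.ofFn (fun i : Fin (t' + 1) => f (m' i)) →
      t = t' ∧ ∀ i ≤ t, m i = m' i) ∧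
    (∃ Φ : List Bool → List ℕ, ∀ (t : ℕ) (m : ℕ → ℕ),
      m 0 = 0 → (∀ i < t, Step (m i) (m (i + 1))) →
      m t = 2 * k → (∀ i < t, m i ≠ 2 * k) →
      Φ (List.ofFn (fun i : Fin (t + 1) => f (m i))) =
        List.ofFn (fun i : Fin (t + 1) => m i)) := by
  have hf : IsParityCoding k f := ⟨h0, h1, heven⟩
  refine ⟨fun t t' m m' h0 hs ht hn h0' hs' ht' hn' hcode =>
    hf.eq_of_ofFn_eq ⟨h0, hs, ht, hn⟩ ⟨h0', hs', ht', hn'⟩ hcode, ?_⟩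
  refine ⟨Function.invFunOn (List.map f) (stoppedPaths k), fun t m h0 hs ht hn => ?_⟩
  simpa only [List.map_ofFn, Function.comp_def] using
    hf.injOn_map.leftInvOn_invFunOn (⟨t, m, ⟨h0, hs, ht, hn⟩, rfl⟩ : _ ∈ stoppedPaths k)

/-- For `k ≥ 1` and a coding `f` with `f(0) = f(1) = 0` and `f(s) = 1` for even
`2 ≤ s ≤ 2k`, the map `(m_0, …, m_t) ↦ (f(m_0), …, f(m_t))` is injective on the set of
admissible paths starting at `0` and stopped at the first visit to `2k`.  Consequently
there is a (necessarily measurable, since the domain is countable) function `Φ` recovering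
the path from its coded string. -/
theorem coded_path_injective (k : ℕ) (hk : 1 ≤ k) (f : ℕ → Bool)
    (h0 : f 0 = false) (h1 : f 1 = false)
    (heven : ∀ s, 2 ≤ s → s ≤ 2 * k → Even s → f s = true) :
    (∀ (t t' : ℕ) (m m' : ℕ → ℕ),
      m 0 = 0 → (∀ i < t, Step (m i) (m (i + 1))) →
      m t = 2 * k → (∀ i < t, m i ≠ 2 * k) →
      m' 0 = 0 → (∀ i < t', Step (m' i) (m' (i + 1))) →
      m' t' = 2 * k → (∀ i < t', m' i ≠ 2 * k) →
      List.ofFn (fun i : Fin (t + 1) => f (m i)) =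
        List.ofFn (fun i : Fin (t' + 1) => f (m' i)) →
      t = t' ∧ ∀ i ≤ t, m i = m' i) ∧
    (∃ Φ : List Bool → List ℕ, ∀ (t : ℕ) (m : ℕ → ℕ),
      m 0 = 0 → (∀ i < t, Step (m i) (m (i + 1))) →
      m t = 2 * k → (∀ i < t, m i ≠ 2 * k) →
      Φ (List.ofFn (fun i : Fin (t + 1) => f (m i))) =
        List.ofFn (fun i : Fin (t + 1) => m i)) :=
  coded_path_injective_general k f h0 h1 heven
end
end

section
/- Let {M_i}_{i≥0} be the Markov chain on ℕ (transitions: 0→1 and 1→2 with probability 1; each s ≥ 2 goes to 0 or to s+1 with probability 1/2 each), let k ≥ 1, let f : ℕ → {0,1} satisfy f(0) = f(1) = 0 and f(s) = 1 for every even s ≥ 2, and set X_i = f(M_i) and ψ_k = min{ i ≥ 0 : M_i = 2k }. Then for every t, almost surely on the event { M_0 = 0, ψ_k = t }, the conditional probability P( X_{t+1} = 1 | X_0,…,X_t ) equals (1/2)·f(2k+1). -/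
/-!
Suppose `M₀ = 0` and `M` first hits `2k` at time `t`. Since `2k` can only be entered from `2k - 1`,
and so on down to `0`, the last `2k + 1` states are `0, 1, …, 2k` and the code `X₀ … X_t` ends in
`0 0 1 ∗ 1 ∗ ⋯ 1`. Every path of positive probability showing the same code is then also at `2k` at
time `t`, so on the atom of `σ(X₀, …, X_t)` containing such a path the chain sits at `2k` almost
surely. By the Markov property `M_{t+1}` is `0` or `2k + 1` with probability `1/2` each, and as
`f 0 = 0` the conditional probability is `f(2k + 1)/2`.
-/

open MeasureTheory

noncomputable section

/-- The Markov transition kernel on `ℕ`: from `0` to `1` with probability `1`, from `1` to `2`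
with probability `1`, and from each `s ≥ 2` to `0` and to `s + 1` with probability `1/2` each. -/
def kerK (s t : ℕ) : ℝ :=
  if s = 0 then (if t = 1 then 1 else 0)
  else if s = 1 then (if t = 2 then 1 else 0)
  else if t = 0 ∨ t = s + 1 then 1 / 2 else 0

lemma kerK_nonneg (s u : ℕ) : 0 ≤ kerK s u := by
  unfold kerK; split_ifs <;> norm_num

lemma kerK_ne_zero_iff {s u : ℕ} : kerK s u ≠ 0 ↔ u = s + 1 ∨ (2 ≤ s ∧ u = 0) := by
  unfold kerK; split_ifs <;> grind

structure IsEvenCoding (f : ℕ → Bool) : Prop where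
  zero : f 0 = false
  one : f 1 = false
  even : ∀ s, 2 ≤ s → Even s → f s = true

lemma IsEvenCoding.mod_two_eq_one_of_eq_false {f : ℕ → Bool} (hf : IsEvenCoding f) {s : ℕ} (hs : 2 ≤ s)
    (h : f s = false) : s % 2 = 1 := by
  by_contra hodd
  have := hf.even s hs (Nat.even_iff.mpr (by omega))
  simp_all

lemma IsEvenCoding.two_le_of_eq_true {f : ℕ → Bool} (hf : IsEvenCoding f) {s : ℕ}
    (h : f s = true) : 2 ≤ s := by
  by_contra hs
  interval_cases s <;> simp_all [hf.zero, hf.one]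

lemma tsum_indicator_kerK_two_mul {f : ℕ → Bool} (hf : IsEvenCoding f) {k : ℕ} (hk : 1 ≤ k) :
    ∑' s, {s | f s = true}.indicator (fun s => ENNReal.ofReal (kerK (2 * k) s)) s =
      ENNReal.ofReal (1 / 2 * (f (2 * k + 1)).toNat) := by
  rw [tsum_eq_single (2 * k + 1)]
  · have hhalf : kerK (2 * k) (2 * k + 1) = 1 / 2 := by
      unfold kerK
      rw [if_neg (by omega), if_neg (by omega), if_pos (Or.inr rfl)]
    cases hfk : f (2 * k + 1) <;> simp [hfk, hhalf]
  · intro s hs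
    by_cases hfs : f s = true
    · have hs0 : s ≠ 0 := by rintro rfl; simp [hf.zero] at hfs
      have hzero : kerK (2 * k) s = 0 := by
        by_contra h
        have := kerK_ne_zero_iff.mp h
        omega
      simp [hzero]
    · simp [hfs]

def Admissible (n : ℕ) (a : ℕ → ℕ) : Prop :=
  ∀ i < n, kerK (a i) (a (i + 1)) ≠ 0

namespace Admissible

variable {n : ℕ} {a : ℕ → ℕ}

lemma mono {m : ℕ} (ha : Admissible n a) (hmn : m ≤ n) : Admissible m a :=
  fun i hi => ha i (hi.trans_le hmn)

lemma succ_eq_or (ha : Admissible n a) {i : ℕ} (hi : i < n) :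
    a (i + 1) = a i + 1 ∨ (2 ≤ a i ∧ a (i + 1) = 0) :=
  kerK_ne_zero_iff.mp (ha i hi)

lemma exists_climb (ha : Admissible n a) (h0 : a 0 = 0) {m : ℕ} (hm : a n = m) :
    ∃ r, n = r + m ∧ ∀ j ≤ m, a (r + j) = j := by
  induction m generalizing n with
  | zero => exact ⟨n, rfl, fun j hj => by simp_all⟩
  | succ m ih =>
    obtain ⟨n, rfl⟩ : ∃ n', n = n' + 1 := Nat.exists_eq_succ_of_ne_zero (by rintro rfl; omega)
    have hprev : a n = m := by have := ha.succ_eq_or n.lt_add_one; omega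
    obtain ⟨r, rfl, hclimb⟩ := ih (ha.mono n.le_succ) hprev
    refine ⟨r, by omega, fun j hj => ?_⟩
    rcases hj.lt_or_eq with hj | rfl
    · exact hclimb j (by omega)
    · rw [← add_assoc, hm]

/-- Reading the code `0 0 1 ∗ 1 ∗ ⋯ 1` pins the path to the climb `0, 1, …, 2k`: a visit to `0`
inside the window is followed by `1`, whose code `0` clashes with the `1` read at the next even
position. -/
lemma eq_two_mul_of_code {f : ℕ → Bool} (hf : IsEvenCoding f) {r k : ℕ} (hk : 1 ≤ k)
    (ha : Admissible (r + 2 * k) a) (hcode : ∀ j ≤ 2 * k, f (a (r + j)) = f j) :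
    a (r + 2 * k) = 2 * k := by
  have hval : ∀ j ≤ 2 * k, 2 ≤ j → j % 2 = 0 → 2 ≤ a (r + j) := fun j hj h2 heven =>
    hf.two_le_of_eq_true ((hcode j hj).trans (hf.even j h2 (Nat.even_iff.mpr heven)))
  have hone : a (r + 1) = 1 := by
    have h0 : f (a r) = false := by simpa [hf.zero] using hcode 0 (by omega)
    have h1 : f (a (r + 1)) = false := (hcode 1 (by omega)).trans hf.one
    have h2 := hval 2 (by omega) le_rfl rfl
    have h01 : a (r + 1) = a r + 1 ∨ (2 ≤ a r ∧ a (r + 1) = 0) :=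
      ha.succ_eq_or (i := r) (by omega)
    have h12 : a (r + 2) = a (r + 1) + 1 ∨ (2 ≤ a (r + 1) ∧ a (r + 2) = 0) :=
      ha.succ_eq_or (i := r + 1) (by omega)
    by_contra hne
    have := hf.mod_two_eq_one_of_eq_false (by omega) h1
    have := hf.mod_two_eq_one_of_eq_false (by omega) h0
    omega
  suffices ∀ j, 1 ≤ j → j ≤ 2 * k → a (r + j) = j from this _ (by omega) le_rfl
  intro j hj1 hj2
  induction j with
  | zero => omega
  | succ j ih =>
    rcases hj1.lt_or_eq with hj1 | hj1
    · have hj := ih (by omega) (by omega)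
      have hstep : a (r + (j + 1)) = a (r + j) + 1 ∨ (2 ≤ a (r + j) ∧ a (r + (j + 1)) = 0) :=
        ha.succ_eq_or (i := r + j) (by omega)
      rcases Nat.mod_two_eq_zero_or_one (j + 1) with heven | hodd
      · have := hval (j + 1) hj2 (by omega) heven
        omega
      · have hnext : a (r + (j + 2)) = a (r + (j + 1)) + 1 ∨
            (2 ≤ a (r + (j + 1)) ∧ a (r + (j + 2)) = 0) :=
          ha.succ_eq_or (i := r + (j + 1)) (by omega)
        have := hval (j + 2) (by omega) (by omega) (by omega)
        omega
    · obtain rfl : j = 0 := by omega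
      exact hone

end Admissible

open scoped ENNReal

def cyl (n : ℕ) (a : ℕ → ℕ) : Set NPath := {ω | ∀ i ≤ n, ω i = a i}

lemma cyl_congr {n : ℕ} {a b : ℕ → ℕ} (h : ∀ i ≤ n, a i = b i) : cyl n a = cyl n b := by
  ext ω
  exact forall₂_congr fun i hi => by rw [h i hi]

lemma cyl_inter_eval_succ (n : ℕ) (a : ℕ → ℕ) (s : ℕ) :
    cyl n a ∩ (fun ω => ω (n + 1)) ⁻¹' {s} = cyl (n + 1) (Function.update a (n + 1) s) := by
  ext ω
  simp only [cyl, Set.mem_inter_iff, Set.mem_ofPred_eq, Set.mem_preimage, Set.mem_singleton_iff,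
    Nat.le_succ_iff, or_imp, forall_and, forall_eq, Function.update_self]
  refine and_congr_left fun _ => forall₂_congr fun i hi => ?_
  rw [Function.update_of_ne (by omega)]

def pathPrefix (n : ℕ) (ω : NPath) : Fin (n + 1) → ℕ := fun i => ω i

lemma measurable_pathPrefix (n : ℕ) : Measurable (pathPrefix n) :=
  measurable_pi_lambda _ fun _ => measurable_pi_apply _

lemma pathPrefix_preimage_singleton (n : ℕ) (ω : NPath) :
    pathPrefix n ⁻¹' {pathPrefix n ω} = cyl n ω := by
  ext ω'
  simp [pathPrefix, cyl, funext_iff, Fin.forall_iff]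

lemma ae_measure_cyl_ne_zero (μ : Measure NPath) (n : ℕ) : ∀ᵐ ω ∂μ, μ (cyl n ω) ≠ 0 := by
  have hp := measurable_pathPrefix n
  have hmap : ∀ᵐ p ∂μ.map (pathPrefix n), μ.map (pathPrefix n) {p} ≠ 0 :=
    ae_iff_of_countable.mpr fun _ h => h
  filter_upwards [ae_of_ae_map hp.aemeasurable hmap] with ω hω
  rwa [Measure.map_apply hp (measurableSet_singleton _), pathPrefix_preimage_singleton] at hω

lemma measure_eq_tsum_pathPrefix_preimage_inter (μ : Measure NPath) (n : ℕ) (S : Set NPath) :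
    μ S = ∑' p, μ (pathPrefix n ⁻¹' {p} ∩ S) := by
  have hp := measurable_pathPrefix n
  have := tsum_measure_preimage_singleton (μ := μ.restrict S) Set.countable_univ
    (fun p _ => hp (measurableSet_singleton p))
  rw [tsum_univ (f := fun p => μ.restrict S (pathPrefix n ⁻¹' {p})), Set.preimage_univ,
    Measure.restrict_apply_univ] at this
  rw [← this]
  exact tsum_congr fun p => Measure.restrict_apply (hp (measurableSet_singleton p))

lemma measure_inter_eq_mul_of_forall_cyl {μ : Measure NPath} {n : ℕ} {V W : Set NPath}
    {c : ℝ≥0∞} (hV : ∀ ω ∈ V, cyl n ω ⊆ V)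
    (hW : ∀ ω ∈ V, μ (cyl n ω) ≠ 0 → μ (cyl n ω ∩ W) = c * μ (cyl n ω)) :
    μ (V ∩ W) = c * μ V := by
  rw [measure_eq_tsum_pathPrefix_preimage_inter μ n,
    measure_eq_tsum_pathPrefix_preimage_inter μ n V, ← ENNReal.tsum_mul_left]
  refine tsum_congr fun p => ?_
  by_cases hnull : μ (pathPrefix n ⁻¹' {p} ∩ V) = 0
  · rw [hnull, mul_zero]
    exact measure_mono_null (by gcongr; exact Set.inter_subset_left) hnull
  obtain ⟨ω, rfl, hωV⟩ := nonempty_of_measure_ne_zero hnull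
  rw [pathPrefix_preimage_singleton, Set.inter_eq_left.mpr (hV ω hωV)] at hnull ⊢
  rw [← Set.inter_assoc, Set.inter_eq_left.mpr (hV ω hωV), hW ω hωV hnull]

def IsMarkovLaw (μ : Measure NPath) (ρ : ℕ → ℝ) : Prop :=
  ∀ (n : ℕ) (a : ℕ → ℕ),
    μ (cyl n a) = ENNReal.ofReal (ρ (a 0) * ∏ i ∈ Finset.range n, kerK (a i) (a (i + 1)))

namespace IsMarkovLaw

variable {μ : Measure NPath} {ρ : ℕ → ℝ}

lemma measure_cyl_succ (hμ : IsMarkovLaw μ ρ) (n : ℕ) (a : ℕ → ℕ) :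
    μ (cyl (n + 1) a) = μ (cyl n a) * ENNReal.ofReal (kerK (a n) (a (n + 1))) := by
  rw [hμ, hμ, Finset.prod_range_succ, ← mul_assoc, ENNReal.ofReal_mul' (kerK_nonneg _ _)]

lemma admissible_of_measure_cyl_ne_zero (hμ : IsMarkovLaw μ ρ) {n : ℕ} {a : ℕ → ℕ}
    (h : μ (cyl n a) ≠ 0) : Admissible n a := by
  intro i hi hzero
  rw [hμ, Finset.prod_eq_zero (Finset.mem_range.mpr hi) hzero, mul_zero,
    ENNReal.ofReal_zero] at h
  exact h rfl

lemma measure_cyl_inter_eval_succ (hμ : IsMarkovLaw μ ρ) (n : ℕ) (a : ℕ → ℕ) (s : ℕ) :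
    μ (cyl n a ∩ (fun ω => ω (n + 1)) ⁻¹' {s}) = μ (cyl n a) * ENNReal.ofReal (kerK (a n) s) := by
  rw [cyl_inter_eval_succ, hμ.measure_cyl_succ, Function.update_self,
    Function.update_of_ne (by omega), cyl_congr fun i hi => Function.update_of_ne (by omega) _ _]

lemma measure_cyl_inter_eval_succ_preimage (hμ : IsMarkovLaw μ ρ) (n : ℕ) (a : ℕ → ℕ)
    (B : Set ℕ) :
    μ (cyl n a ∩ (fun ω => ω (n + 1)) ⁻¹' B) =
      μ (cyl n a) * ∑' s, B.indicator (fun s => ENNReal.ofReal (kerK (a n) s)) s := by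
  have hfiber := tsum_measure_preimage_singleton (μ := μ.restrict (cyl n a)) B.to_countable
    (f := fun ω : NPath => ω (n + 1)) fun s _ => measurable_pi_apply _ (measurableSet_singleton s)
  rw [Measure.restrict_apply (measurable_pi_apply (n + 1) MeasurableSet.of_discrete),
    Set.inter_comm] at hfiber
  rw [← hfiber, tsum_subtype B fun s => μ.restrict (cyl n a) ((fun ω : NPath => ω (n + 1)) ⁻¹' {s}),
    ← ENNReal.tsum_mul_left]
  refine tsum_congr fun s => ?_
  by_cases hs : s ∈ B
  · rw [Set.indicator_of_mem hs, Set.indicator_of_mem hs,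
      Measure.restrict_apply (measurable_pi_apply (n + 1) (measurableSet_singleton s)),
      Set.inter_comm, hμ.measure_cyl_inter_eval_succ]
  · rw [Set.indicator_of_notMem hs, Set.indicator_of_notMem hs, mul_zero]

end IsMarkovLaw

def codedPrefix (f : ℕ → Bool) (n : ℕ) (ω : NPath) : Fin (n + 1) → Bool := fun i => f (ω i)

lemma cyl_subset_codedPrefix_preimage (f : ℕ → Bool) (n : ℕ) (ω : NPath) :
    cyl n ω ⊆ codedPrefix f n ⁻¹' {codedPrefix f n ω} := fun ω' hω' => by
  funext i
  simp only [codedPrefix, hω' i (Nat.lt_succ_iff.mp i.isLt)]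

lemma IsMarkovLaw.measure_codedPrefix_preimage_inter {μ : Measure NPath} {ρ : ℕ → ℝ}
    (hμ : IsMarkovLaw μ ρ) {f : ℕ → Bool} (hf : IsEvenCoding f) {k : ℕ} (hk : 1 ≤ k) {t : ℕ}
    {ω₀ : NPath} (ha : Admissible t ω₀) (h0 : ω₀ 0 = 0) (ht : ω₀ t = 2 * k) :
    μ (codedPrefix f t ⁻¹' {codedPrefix f t ω₀} ∩ (fun ω => ω (t + 1)) ⁻¹' {s | f s = true}) =
      ENNReal.ofReal (1 / 2 * (f (2 * k + 1)).toNat) *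
        μ (codedPrefix f t ⁻¹' {codedPrefix f t ω₀}) := by
  obtain ⟨r, rfl, hclimb⟩ := ha.exists_climb h0 ht
  refine measure_inter_eq_mul_of_forall_cyl (n := r + 2 * k) (fun ω hω => ?_) fun ω hω hpos => ?_
  · exact (cyl_subset_codedPrefix_preimage f _ ω).trans (by rw [hω])
  · have hcode : ∀ j ≤ 2 * k, f (ω (r + j)) = f j := fun j hj => by
      have := congrFun hω ⟨r + j, by omega⟩
      simpa [codedPrefix, hclimb j hj] using this
    rw [hμ.measure_cyl_inter_eval_succ_preimage,
      (hμ.admissible_of_measure_cyl_ne_zero hpos).eq_two_mul_of_code hf hk hcode,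
      tsum_indicator_kerK_two_mul hf hk, mul_comm]

/-- Let `{M_i}_{i≥0}` be the Markov chain with kernel `K` and some initial distribution `ρ`
(characterized by the cylinder probabilities), `k ≥ 1`, and let `f : ℕ → {0,1}` satisfy
`f(0) = f(1) = 0` and `f(s) = 1` for every even `s ≥ 2`; set `X_i = f(M_i)`.  Then for every
`t`, almost surely on the event `{M_0 = 0, ψ_k = t}` (i.e. `M_0 = 0`, `M_t = 2k`, and
`M_i ≠ 2k` for `i < t`), the conditional probability `P(X_{t+1} = 1 | X_0, …, X_t)` equals
`(1/2)·f(2k+1)`. -/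
theorem cond_prob_at_hitting_time (μ : Measure NPath) [IsProbabilityMeasure μ]
    (ρ : ℕ → ℝ)
    (hcyl : ∀ (n : ℕ) (a : ℕ → ℕ),
      μ {ω | ∀ i ≤ n, ω i = a i} =
        ENNReal.ofReal (ρ (a 0) * ∏ i ∈ Finset.range n, kerK (a i) (a (i + 1))))
    (k : ℕ) (hk : 1 ≤ k) (f : ℕ → Bool)
    (h0 : f 0 = false) (h1 : f 1 = false)
    (heven : ∀ s, 2 ≤ s → Even s → f s = true)
    (t : ℕ) :
    ∀ᵐ ω ∂μ, (ω 0 = 0 ∧ ω t = 2 * k ∧ ∀ i < t, ω i ≠ 2 * k) →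
      (μ[Set.indicator {ω' : NPath | f (ω' (t + 1)) = true} (fun _ => (1 : ℝ)) |
          MeasurableSpace.comap (fun ω' : NPath => fun i : Fin (t + 1) => f (ω' i))
            MeasurableSpace.pi]) ω
        = (1 / 2 : ℝ) * ((f (2 * k + 1)).toNat : ℝ) := by
  have hμ : IsMarkovLaw μ ρ := hcyl
  have hf : IsEvenCoding f := ⟨h0, h1, heven⟩
  have hX : Measurable (codedPrefix f t) :=
    measurable_pi_lambda _ fun _ => Measurable.of_discrete.comp (measurable_pi_apply _)
  have hY : Measurable fun ω : NPath => ω (t + 1) := measurable_pi_apply _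
  filter_upwards [ProbabilityTheory.condDistrib_ae_eq_condExp hX hY
      (MeasurableSet.of_discrete (s := {s | f s = true})), ae_measure_cyl_ne_zero μ t]
    with ω hcond hpos hE
  refine hcond.symm.trans ?_
  have hatom : μ (codedPrefix f t ⁻¹' {codedPrefix f t ω}) ≠ 0 :=
    fun h => hpos (measure_mono_null (cyl_subset_codedPrefix_preimage f t ω) h)
  rw [measureReal_def, ProbabilityTheory.condDistrib_apply_of_ne_zero hY _
      (by rwa [Measure.map_apply hX (measurableSet_singleton _)]),
    Measure.map_apply hX (measurableSet_singleton _),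
    Measure.map_apply (hX.prodMk hY) ((measurableSet_singleton _).prod MeasurableSet.of_discrete),
    Set.mk_preimage_prod, hμ.measure_codedPrefix_preimage_inter hf hk
      (hμ.admissible_of_measure_cyl_ne_zero hpos) hE.1 hE.2.1, mul_left_comm,
    ENNReal.inv_mul_cancel hatom (measure_ne_top _ _), mul_one,
    ENNReal.toReal_ofReal (by positivity)]
end
end
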